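/- Under the combined assumptions—J is L-smooth; ĝ = (1/B)∑ᵢ Zᵢ Ãᵢ is an unbiased estimator of ∇J(θ) with (Zᵢ,Ãᵢ) i.i.d., ‖Zᵢ‖ ≤ G∞ a.s., V = E[Ã₁²]; F = E[Z₁Z₁ᵀ] positive definite with ∇J(θ) = E[Z₁Ã₁]; ρ = ‖E[F^{-1/2}Z₁·Ã₁]‖/√(dV)—the expected one-step improvement of θ⁺ = θ + αĝ satisfies E[J(θ⁺) - J(θ)] ≤ α(1 + αL/2)·λ_max(F)·d·ρ²·V + (α²L/2)·(G∞²/B)·V. -/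

import Mathlib

open MeasureTheory ProbabilityTheory
open scoped RealInnerProductSpace


lemma rayleigh_aux {d : ℕ} {F : Matrix (Fin d) (Fin d) ℝ} (hF : F.IsHermitian)
    {lam : ℝ} (hlam : ∀ i, hF.eigenvalues i ≤ lam) (x : EuclideanSpace ℝ (Fin d)) :
    ⟪x, Matrix.toEuclideanLin F x⟫ ≤ lam * ‖x‖ ^ 2 := by
  classical
  have hsymm := Matrix.isHermitian_iff_isSymmetric.1 hF
  set b := hF.eigenvectorBasis with hb
  have hTb : ∀ i, Matrix.toEuclideanLin F (b i) = hF.eigenvalues i • b i := by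
    intro i
    ext k
    exact congrFun (hF.mulVec_eigenvectorBasis i) k
  have key : ∀ i, ⟪b i, Matrix.toEuclideanLin F x⟫ = hF.eigenvalues i * ⟪b i, x⟫ := by
    intro i
    rw [← hsymm (b i) x, hTb i, real_inner_smul_left]
  have h1 : ⟪x, Matrix.toEuclideanLin F x⟫
      = ∑ i, hF.eigenvalues i * (⟪x, b i⟫ * ⟪b i, x⟫) := by
    rw [← b.sum_inner_mul_inner x (Matrix.toEuclideanLin F x)]
    refine Finset.sum_congr rfl fun i _ => ?_
    rw [key i]; ring
  have h2 : ⟪x, x⟫ = ∑ i, ⟪x, b i⟫ * ⟪b i, x⟫ := (b.sum_inner_mul_inner x x).symm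
  rw [h1, ← real_inner_self_eq_norm_sq, h2, Finset.mul_sum]
  refine Finset.sum_le_sum fun i _ => ?_
  have hnn : 0 ≤ ⟪x, b i⟫ * ⟪b i, x⟫ := by
    rw [real_inner_comm x (b i)]; exact mul_self_nonneg _
  exact mul_le_mul_of_nonneg_right (hlam i) hnn


set_option maxHeartbeats 4000000 in
/-- full signal–noise decomposition of the expected one-step
improvement (Theorem: upper-bound signal–variance decomposition). -/
theorem stmt_9 {d B : ℕ} (hB : 0 < B) {Ω : Type*} [MeasurableSpace Ω] (μ : Measure Ω)
    [IsProbabilityMeasure μ]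
    (J : EuclideanSpace ℝ (Fin d) → ℝ) (J' : EuclideanSpace ℝ (Fin d) → EuclideanSpace ℝ (Fin d))
    (L : ℝ) (hL : 0 < L)
    (hsmooth : ∀ θ θ' : EuclideanSpace ℝ (Fin d),
      J θ' ≤ J θ + ⟪J' θ, θ' - θ⟫ + L / 2 * ‖θ' - θ‖ ^ 2)
    (α : ℝ) (hα : 0 < α) (θ : EuclideanSpace ℝ (Fin d))
    (Z : Fin B → Ω → EuclideanSpace ℝ (Fin d)) (A : Fin B → Ω → ℝ)
    (hmeas : ∀ i, Measurable fun ω => (Z i ω, A i ω))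
    (hindep : iIndepFun (fun i ω => (Z i ω, A i ω)) μ)
    (hident : ∀ i, IdentDistrib (fun ω => (Z i ω, A i ω))
      (fun ω => (Z ⟨0, hB⟩ ω, A ⟨0, hB⟩ ω)) μ μ)
    (G : ℝ) (hbound : ∀ i, ∀ᵐ ω ∂μ, ‖Z i ω‖ ≤ G)
    (hA2 : ∀ i, MemLp (A i) 2 μ)
    (V : ℝ) (hV : V = ∫ ω, (A ⟨0, hB⟩ ω) ^ 2 ∂μ) (hVpos : 0 < V)
    (g : Ω → EuclideanSpace ℝ (Fin d))
    (hg : ∀ ω, g ω = (B : ℝ)⁻¹ • ∑ i, A i ω • Z i ω)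
    (hgL2 : MemLp g 2 μ)
    (hunbiased : ∫ ω, g ω ∂μ = J' θ)
    (hgrad : J' θ = ∫ ω, A ⟨0, hB⟩ ω • Z ⟨0, hB⟩ ω ∂μ)
    (F : Matrix (Fin d) (Fin d) ℝ)
    (hF : ∀ i j, F i j = ∫ ω, Z ⟨0, hB⟩ ω i * Z ⟨0, hB⟩ ω j ∂μ)
    (hFpd : F.PosDef)
    (S : Matrix (Fin d) (Fin d) ℝ) (hS : S.PosDef) (hSsq : S * S = F)
    (U : Ω → EuclideanSpace ℝ (Fin d)) (hU : ∀ ω i, U ω i = S⁻¹.mulVec (Z ⟨0, hB⟩ ω) i)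
    (ρ : ℝ) (hρ : ρ = ‖∫ ω, A ⟨0, hB⟩ ω • U ω ∂μ‖ / Real.sqrt (d * V))
    (lam : ℝ) (hlam : IsGreatest (Set.range hFpd.isHermitian.eigenvalues) lam)
    (hint : Integrable (fun ω => J (θ + α • g ω)) μ) :
    ∫ ω, (J (θ + α • g ω) - J θ) ∂μ ≤
      α * (1 + α * L / 2) * lam * d * ρ ^ 2 * V +
        α ^ 2 * L / 2 * (G ^ 2 / B) * V := by
  classical
  set i0 : Fin B := ⟨0, hB⟩ with hi0
  obtain ⟨iw, -⟩ := hlam.1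
  have hd : 0 < d := iw.pos
  have hBR : (0:ℝ) < B := by exact_mod_cast hB
  -- the summands
  set X : Fin B → Ω → EuclideanSpace ℝ (Fin d) := fun i ω => A i ω • Z i ω with hX
  have hφm : Measurable (fun p : EuclideanSpace ℝ (Fin d) × ℝ => p.2 • p.1) :=
    measurable_snd.smul measurable_fst
  have hXmeas : ∀ i, Measurable (X i) := fun i => hφm.comp (hmeas i)
  have hAmeas : ∀ i, Measurable (A i) := fun i => measurable_snd.comp (hmeas i)
  have hZmeas : ∀ i, Measurable (Z i) := fun i => measurable_fst.comp (hmeas i)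
  have hAint : ∀ i, Integrable (A i) μ := fun i => (hA2 i).integrable one_le_two
  have hG0 : 0 ≤ G := by
    obtain ⟨ω, hω⟩ := (hbound i0).exists
    exact (norm_nonneg _).trans hω
  have hXint : ∀ i, Integrable (X i) μ := by
    intro i
    refine Integrable.mono' ((hAint i).norm.const_mul G) (hXmeas i).aestronglyMeasurable ?_
    filter_upwards [hbound i] with ω hω
    rw [hX]; simp only [norm_smul]
    calc ‖A i ω‖ * ‖Z i ω‖ ≤ ‖A i ω‖ * G := mul_le_mul_of_nonneg_left hω (norm_nonneg _)
      _ = G * ‖A i ω‖ := mul_comm _ _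
  have hXident : ∀ i, IdentDistrib (X i) (X i0) μ μ := fun i => (hident i).comp hφm
  have hA2ident : ∀ i, IdentDistrib (fun ω => (A i ω) ^ 2) (fun ω => (A i0 ω) ^ 2) μ μ :=
    fun i => (hident i).comp ((measurable_snd.pow_const 2))
  have hA2int : ∀ i, Integrable (fun ω => (A i ω) ^ 2) μ := by
    intro i
    have := (hA2 i).integrable_norm_rpow two_ne_zero ENNReal.ofNat_ne_top
    simpa [Real.rpow_natCast, sq_abs] using this
  have hEX : ∀ i, ∫ ω, X i ω ∂μ = J' θ := by
    intro i
    rw [(hXident i).integral_eq, hgrad]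
  have hEXk : ∀ i k, ∫ ω, X i ω k ∂μ = J' θ k := by
    intro i k
    have h := (EuclideanSpace.proj k (𝕜 := ℝ)).integral_comp_comm (hXint i)
    simpa [hEX i] using h
  set P : ℝ := ‖J' θ‖ ^ 2 with hP
  have hP0 : 0 ≤ P := sq_nonneg _
  have hkmeas : ∀ k : Fin d, Measurable (fun x : EuclideanSpace ℝ (Fin d) => x k) :=
    fun k => (EuclideanSpace.proj k (𝕜 := ℝ)).continuous.measurable
  have hXkint : ∀ i k, Integrable (fun ω => X i ω k) μ :=
    fun i k => (EuclideanSpace.proj k (𝕜 := ℝ)).integrable_comp (hXint i)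
  -- off-diagonal terms
  have hoff : ∀ i j, i ≠ j → ∫ ω, ⟪X i ω, X j ω⟫ ∂μ = P := by
    intro i j hij
    have hXij : IndepFun (X i) (X j) μ := (hindep.indepFun hij).comp hφm hφm
    have hrw : ∀ ω, ⟪X i ω, X j ω⟫ = ∑ k, X i ω k * X j ω k := by
      intro ω
      simp [PiLp.inner_apply, RCLike.inner_apply, conj_trivial]
      exact Finset.sum_congr rfl fun _ _ => mul_comm _ _
    calc ∫ ω, ⟪X i ω, X j ω⟫ ∂μ = ∫ ω, ∑ k, X i ω k * X j ω k ∂μ := by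
          simp_rw [hrw]
      _ = ∑ k, ∫ ω, X i ω k * X j ω k ∂μ := by
          refine integral_finset_sum _ fun k _ => ?_
          exact (hXij.comp (hkmeas k) (hkmeas k)).integrable_mul (hXkint i k) (hXkint j k)
      _ = ∑ k, (∫ ω, X i ω k ∂μ) * ∫ ω, X j ω k ∂μ := by
          refine Finset.sum_congr rfl fun k _ => ?_
          exact (hXij.comp (hkmeas k) (hkmeas k)).integral_fun_mul_eq_mul_integral
            (hXkint i k).aestronglyMeasurable (hXkint j k).aestronglyMeasurable
      _ = ∑ k, J' θ k * J' θ k := by simp_rw [hEXk]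
      _ = P := by
          rw [hP, ← real_inner_self_eq_norm_sq]
          simp [PiLp.inner_apply, RCLike.inner_apply, conj_trivial]
          rw [EuclideanSpace.real_norm_sq_eq]; simp [sq]
  -- diagonal terms
  have hdiagbound : ∀ i, ∀ᵐ ω ∂μ, ⟪X i ω, X i ω⟫ ≤ G ^ 2 * (A i ω) ^ 2 := by
    intro i
    filter_upwards [hbound i] with ω hω
    rw [real_inner_self_eq_norm_sq, hX]
    simp only [norm_smul, mul_pow, sq_abs]
    have h1 : ‖Z i ω‖ ^ 2 ≤ G ^ 2 := by
      have := norm_nonneg (Z i ω); nlinarith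
    calc ‖A i ω‖ ^ 2 * ‖Z i ω‖ ^ 2 ≤ ‖A i ω‖ ^ 2 * G ^ 2 :=
          mul_le_mul_of_nonneg_left h1 (sq_nonneg _)
      _ = G ^ 2 * (A i ω) ^ 2 := by rw [Real.norm_eq_abs, sq_abs]; ring
  have hdiagint : ∀ i, Integrable (fun ω => ⟪X i ω, X i ω⟫) μ := by
    intro i
    refine Integrable.mono' ((hA2int i).const_mul (G ^ 2))
      ((hXmeas i).inner (hXmeas i)).aestronglyMeasurable ?_
    filter_upwards [hdiagbound i] with ω hω
    rwa [Real.norm_eq_abs, abs_of_nonneg real_inner_self_nonneg]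
  have hdiag : ∀ i, ∫ ω, ⟪X i ω, X i ω⟫ ∂μ ≤ G ^ 2 * V := by
    intro i
    have h1 : ∫ ω, ⟪X i ω, X i ω⟫ ∂μ ≤ ∫ ω, G ^ 2 * (A i ω) ^ 2 ∂μ :=
      integral_mono_ae (hdiagint i) ((hA2int i).const_mul _) (hdiagbound i)
    calc ∫ ω, ⟪X i ω, X i ω⟫ ∂μ ≤ ∫ ω, G ^ 2 * (A i ω) ^ 2 ∂μ := h1
      _ = G ^ 2 * ∫ ω, (A i ω) ^ 2 ∂μ := integral_const_mul _ _
      _ = G ^ 2 * V := by rw [hV, (hA2ident i).integral_eq]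
  -- integrability of inner products
  have hinner_int : ∀ i j, Integrable (fun ω => ⟪X i ω, X j ω⟫) μ := by
    intro i j
    refine Integrable.mono' ((((hA2int i).add (hA2int j)).const_mul (G ^ 2 / 2)))
      ((hXmeas i).inner (hXmeas j)).aestronglyMeasurable ?_
    filter_upwards [hbound i, hbound j] with ω hi hj
    have h1 : ‖⟪X i ω, X j ω⟫‖ ≤ ‖X i ω‖ * ‖X j ω‖ := norm_inner_le_norm _ _
    have h2 : ‖X i ω‖ ≤ G * ‖A i ω‖ := by
      rw [hX]; simp only [norm_smul]
      calc ‖A i ω‖ * ‖Z i ω‖ ≤ ‖A i ω‖ * G := mul_le_mul_of_nonneg_left hi (norm_nonneg _)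
        _ = G * ‖A i ω‖ := mul_comm _ _
    have h3 : ‖X j ω‖ ≤ G * ‖A j ω‖ := by
      rw [hX]; simp only [norm_smul]
      calc ‖A j ω‖ * ‖Z j ω‖ ≤ ‖A j ω‖ * G := mul_le_mul_of_nonneg_left hj (norm_nonneg _)
        _ = G * ‖A j ω‖ := mul_comm _ _
    have h4 : ‖X i ω‖ * ‖X j ω‖ ≤ (G * ‖A i ω‖) * (G * ‖A j ω‖) :=
      mul_le_mul h2 h3 (norm_nonneg _) (by positivity)
    have h5 : ‖A i ω‖ * ‖A j ω‖ ≤ ((A i ω) ^ 2 + (A j ω) ^ 2) / 2 := by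
      have := sq_nonneg (‖A i ω‖ - ‖A j ω‖)
      simp only [Real.norm_eq_abs] at *
      nlinarith [sq_abs (A i ω), sq_abs (A j ω)]
    calc ‖⟪X i ω, X j ω⟫‖ ≤ (G * ‖A i ω‖) * (G * ‖A j ω‖) := h1.trans h4
      _ = G ^ 2 * (‖A i ω‖ * ‖A j ω‖) := by ring
      _ ≤ G ^ 2 * (((A i ω) ^ 2 + (A j ω) ^ 2) / 2) :=
          mul_le_mul_of_nonneg_left h5 (by positivity)
      _ = G ^ 2 / 2 * ((A i ω) ^ 2 + (A j ω) ^ 2) := by ring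
  -- second moment of g
  have hg2int : Integrable (fun ω => ‖g ω‖ ^ 2) μ := by
    have := hgL2.integrable_norm_rpow two_ne_zero ENNReal.ofNat_ne_top
    simpa [Real.rpow_natCast] using this
  have hEg2 : ∫ ω, ‖g ω‖ ^ 2 ∂μ ≤ P + G ^ 2 * V / B := by
    have hrw : ∀ ω, ‖g ω‖ ^ 2 = ((B:ℝ)⁻¹) ^ 2 * ∑ i, ∑ j, ⟪X i ω, X j ω⟫ := by
      intro ω
      have hs : ‖∑ i, X i ω‖ ^ 2 = ∑ i, ∑ j, ⟪X i ω, X j ω⟫ := by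
        rw [← real_inner_self_eq_norm_sq, sum_inner]
        exact Finset.sum_congr rfl fun i _ => inner_sum _ _ _
      rw [hg ω, norm_smul, mul_pow, hs]
      congr 1
      rw [norm_inv, Real.norm_natCast]
    have hterm : ∀ i j, ∫ ω, ⟪X i ω, X j ω⟫ ∂μ ≤ P + if i = j then G ^ 2 * V else 0 := by
      intro i j
      by_cases hij : i = j
      · subst hij
        rw [if_pos rfl]
        have h := hdiag i
        linarith [hP0]
      · rw [hoff i j hij, if_neg hij]
        simp
    calc ∫ ω, ‖g ω‖ ^ 2 ∂μ
        = ((B:ℝ)⁻¹) ^ 2 * ∑ i, ∑ j, ∫ ω, ⟪X i ω, X j ω⟫ ∂μ := by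
          simp_rw [hrw]
          rw [integral_const_mul]
          congr 1
          rw [integral_finset_sum _ fun i _ => integrable_finset_sum _ fun j _ => hinner_int i j]
          exact Finset.sum_congr rfl fun i _ =>
            integral_finset_sum _ fun j _ => hinner_int i j
      _ ≤ ((B:ℝ)⁻¹) ^ 2 * ∑ i : Fin B, ∑ j : Fin B, (P + if i = j then G ^ 2 * V else 0) := by
          refine mul_le_mul_of_nonneg_left ?_ (by positivity)
          exact Finset.sum_le_sum fun i _ => Finset.sum_le_sum fun j _ => hterm i j
      _ = ((B:ℝ)⁻¹) ^ 2 * (B ^ 2 * P + B * (G ^ 2 * V)) := by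
          have hrow : ∀ i : Fin B, ∑ j : Fin B, (P + if i = j then G ^ 2 * V else 0)
              = B * P + G ^ 2 * V := by
            intro i
            rw [Finset.sum_add_distrib, Finset.sum_const, Finset.card_univ,
              Fintype.card_fin, nsmul_eq_mul, Finset.sum_ite_eq]
            simp
          rw [Finset.sum_congr rfl fun i _ => hrow i, Finset.sum_const, Finset.card_univ,
            Fintype.card_fin, nsmul_eq_mul]
          ring
      _ = P + G ^ 2 * V / B := by
          field_simp
  -- smoothness step
  have hstep : ∀ ω, J (θ + α • g ω) - J θ ≤ α * ⟪J' θ, g ω⟫ + α ^ 2 * L / 2 * ‖g ω‖ ^ 2 := by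
    intro ω
    have h := hsmooth θ (θ + α • g ω)
    rw [add_sub_cancel_left, real_inner_smul_right, norm_smul] at h
    have h2 : L / 2 * (‖α‖ * ‖g ω‖) ^ 2 = α ^ 2 * L / 2 * ‖g ω‖ ^ 2 := by
      rw [mul_pow, Real.norm_eq_abs, sq_abs]; ring
    linarith [h]
  have hginner_int : Integrable (fun ω => ⟪J' θ, g ω⟫) μ :=
    (hgL2.integrable one_le_two).const_inner _
  -- signal bound
  set m : EuclideanSpace ℝ (Fin d) := ∫ ω, A i0 ω • U ω ∂μ with hm
  have hUfun : ∀ ω, U ω = Matrix.toEuclideanLin S⁻¹ (Z i0 ω) := by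
    intro ω
    ext k
    exact hU ω k
  have hSdet : IsUnit S.det := hS.det_pos.ne'.isUnit
  have hSZ : ∀ ω, X i0 ω = Matrix.toEuclideanLin S (A i0 ω • U ω) := by
    intro ω
    rw [_root_.map_smul, hUfun]
    have h : Matrix.toEuclideanLin S (Matrix.toEuclideanLin S⁻¹ (Z i0 ω)) = Z i0 ω := by
      ext k
      show Matrix.mulVec S (Matrix.mulVec S⁻¹ (Z i0 ω)) k = Z i0 ω k
      rw [Matrix.mulVec_mulVec, Matrix.mul_nonsing_inv _ hSdet, Matrix.one_mulVec]
    rw [h]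
  have hUmeas : Measurable U := by
    rw [funext hUfun]
    exact ((LinearMap.toContinuousLinearMap
      (Matrix.toEuclideanLin S⁻¹)).continuous.measurable).comp (hZmeas i0)
  have hAUint : Integrable (fun ω => A i0 ω • U ω) μ := by
    set C : ℝ := ‖LinearMap.toContinuousLinearMap (Matrix.toEuclideanLin S⁻¹)‖ with hC
    refine Integrable.mono' ((hAint i0).norm.const_mul (C * G))
      (((hAmeas i0).smul hUmeas).aestronglyMeasurable) ?_
    filter_upwards [hbound i0] with ω hω
    rw [norm_smul]
    have h1 : ‖U ω‖ ≤ C * G := by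
      rw [hUfun ω]
      calc ‖Matrix.toEuclideanLin S⁻¹ (Z i0 ω)‖
          = ‖LinearMap.toContinuousLinearMap (Matrix.toEuclideanLin S⁻¹) (Z i0 ω)‖ := rfl
        _ ≤ C * ‖Z i0 ω‖ := (LinearMap.toContinuousLinearMap
            (Matrix.toEuclideanLin S⁻¹)).le_opNorm _
        _ ≤ C * G := mul_le_mul_of_nonneg_left hω (norm_nonneg _)
    calc ‖A i0 ω‖ * ‖U ω‖ ≤ ‖A i0 ω‖ * (C * G) :=
          mul_le_mul_of_nonneg_left h1 (norm_nonneg _)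
      _ = C * G * ‖A i0 ω‖ := mul_comm _ _
  have hJm : J' θ = Matrix.toEuclideanLin S m := by
    rw [hgrad]
    have h1 : (fun ω => A i0 ω • Z i0 ω) = fun ω =>
        LinearMap.toContinuousLinearMap (Matrix.toEuclideanLin S) (A i0 ω • U ω) := by
      funext ω
      exact hSZ ω
    rw [h1, (LinearMap.toContinuousLinearMap (Matrix.toEuclideanLin S)).integral_comp_comm hAUint]
    rfl
  have hPle : P ≤ lam * ‖m‖ ^ 2 := by
    have hSsymm := Matrix.isHermitian_iff_isSymmetric.1 hS.isHermitian
    have hmul : Matrix.toEuclideanLin S (Matrix.toEuclideanLin S m) =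
        Matrix.toEuclideanLin F m := by
      ext k
      show Matrix.mulVec S (Matrix.mulVec S m) k = Matrix.mulVec F m k
      rw [Matrix.mulVec_mulVec, hSsq]
    calc P = ⟪Matrix.toEuclideanLin S m, Matrix.toEuclideanLin S m⟫ := by
          rw [hP, hJm, real_inner_self_eq_norm_sq]
      _ = ⟪m, Matrix.toEuclideanLin S (Matrix.toEuclideanLin S m)⟫ := hSsymm m _
      _ = ⟪m, Matrix.toEuclideanLin F m⟫ := by rw [hmul]
      _ ≤ lam * ‖m‖ ^ 2 := rayleigh_aux hFpd.isHermitian (fun i => hlam.2 ⟨i, rfl⟩) m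
  have hnm : ‖m‖ ^ 2 = d * ρ ^ 2 * V := by
    have hdV : (0:ℝ) < d * V := by positivity
    rw [hρ, div_pow, Real.sq_sqrt hdV.le]
    field_simp
  have hQ : P ≤ lam * d * ρ ^ 2 * V := by
    calc P ≤ lam * ‖m‖ ^ 2 := hPle
      _ = lam * d * ρ ^ 2 * V := by rw [hnm]; ring
  -- final assembly
  have hcoef : 0 ≤ α * (1 + α * L / 2) := by positivity
  calc ∫ ω, (J (θ + α • g ω) - J θ) ∂μ
      ≤ ∫ ω, (α * ⟪J' θ, g ω⟫ + α ^ 2 * L / 2 * ‖g ω‖ ^ 2) ∂μ := by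
        refine integral_mono (hint.sub (integrable_const _))
          ((hginner_int.const_mul α).add (hg2int.const_mul _)) hstep
    _ = α * ∫ ω, ⟪J' θ, g ω⟫ ∂μ + α ^ 2 * L / 2 * ∫ ω, ‖g ω‖ ^ 2 ∂μ := by
        rw [integral_add (hginner_int.const_mul α) (hg2int.const_mul _),
          integral_const_mul, integral_const_mul]
    _ = α * P + α ^ 2 * L / 2 * ∫ ω, ‖g ω‖ ^ 2 ∂μ := by
        rw [integral_inner (hgL2.integrable one_le_two), hunbiased,
          real_inner_self_eq_norm_sq]
    _ ≤ α * P + α ^ 2 * L / 2 * (P + G ^ 2 * V / B) := by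
        have h : (0:ℝ) ≤ α ^ 2 * L / 2 := by positivity
        nlinarith [hEg2]
    _ = α * (1 + α * L / 2) * P + α ^ 2 * L / 2 * (G ^ 2 / B * V) := by ring
    _ ≤ α * (1 + α * L / 2) * (lam * d * ρ ^ 2 * V) + α ^ 2 * L / 2 * (G ^ 2 / B * V) := by
        have := mul_le_mul_of_nonneg_left hQ hcoef
        linarith
    _ = α * (1 + α * L / 2) * lam * d * ρ ^ 2 * V + α ^ 2 * L / 2 * (G ^ 2 / B) * V := by ring
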